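/- arXiv:1607.06246 — 4 statements merged into one kernel-verified Lean document; each statement's English description precedes it below -/
import Mathlib

section
/- Let X and Y be Banach spaces and let S be a bounded operator on X ⊕ Y, written in block form S = [[a, b],[c, d]] with a: X→X, b: Y→X, c: X→Y, d: Y→Y, satisfying S² = 1. Then bc = (1+a)(1−a) and cb = (1+d)(1−d), and the following are equivalent: (i) b: Y→X and c: X→Y are both invertible; (ii) the four operators 1+a, 1−a (on X) and 1+d, 1−d (on Y) are all invertible. -/
/-- Let `S = [[a,b],[c,d]]` be a bounded block operator on `X ⊕ Y` with `S² = 1` (expressed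
through the four block identities).  Then `bc = (1+a)(1-a)` and `cb = (1+d)(1-d)`, and
`b, c` are both invertible if and only if the four operators `1 ± a` and `1 ± d` are all
invertible. -/
theorem stmt6 {X Y : Type*} [NormedAddCommGroup X] [NormedSpace ℂ X]
    [NormedAddCommGroup Y] [NormedSpace ℂ Y]
    (a : X →L[ℂ] X) (b : Y →L[ℂ] X) (c : X →L[ℂ] Y) (d : Y →L[ℂ] Y)
    (h11 : a.comp a + b.comp c = 1)
    (h12 : a.comp b + b.comp d = 0)
    (h21 : c.comp a + d.comp c = 0)
    (h22 : c.comp b + d.comp d = 1) :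
    (b.comp c = (1 + a).comp (1 - a) ∧ c.comp b = (1 + d).comp (1 - d)) ∧
    (((∃ b' : X →L[ℂ] Y, b.comp b' = (1 : X →L[ℂ] X) ∧ b'.comp b = (1 : Y →L[ℂ] Y)) ∧
      (∃ c' : Y →L[ℂ] X, c.comp c' = (1 : Y →L[ℂ] Y) ∧ c'.comp c = (1 : X →L[ℂ] X))) ↔
      (IsUnit ((1 : X →L[ℂ] X) + a) ∧ IsUnit ((1 : X →L[ℂ] X) - a) ∧
       IsUnit ((1 : Y →L[ℂ] Y) + d) ∧ IsUnit ((1 : Y →L[ℂ] Y) - d))) := by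
  have hbc : b.comp c = (1 + a) * (1 - a) := by
    have h11' : a * a + b.comp c = 1 := h11
    have h1 : b.comp c = 1 - a * a := by rw [← h11']; abel
    rw [h1]; noncomm_ring
  have hcb : c.comp b = (1 + d) * (1 - d) := by
    have h22' : c.comp b + d * d = 1 := h22
    have h1 : c.comp b = 1 - d * d := by rw [← h22']; abel
    rw [h1]; noncomm_ring
  have ca : Commute ((1 : X →L[ℂ] X) + a) (1 - a) := by
    unfold Commute SemiconjBy; noncomm_ring
  have cd : Commute ((1 : Y →L[ℂ] Y) + d) (1 - d) := by
    unfold Commute SemiconjBy; noncomm_ring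
  refine ⟨⟨hbc, hcb⟩, ?_⟩
  constructor
  · rintro ⟨⟨b', hb1, hb2⟩, ⟨c', hc1, hc2⟩⟩
    have hu : IsUnit ((1 + a) * (1 - a)) := by
      rw [← hbc]
      refine ⟨⟨b.comp c, c'.comp b', ?_, ?_⟩, rfl⟩
      · show (b.comp c).comp (c'.comp b') = 1
        rw [ContinuousLinearMap.comp_assoc, ← ContinuousLinearMap.comp_assoc c c' b', hc1,
          ContinuousLinearMap.one_def, ContinuousLinearMap.id_comp, hb1]
      · show (c'.comp b').comp (b.comp c) = 1
        rw [ContinuousLinearMap.comp_assoc, ← ContinuousLinearMap.comp_assoc b' b c, hb2,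
          ContinuousLinearMap.one_def, ContinuousLinearMap.id_comp, hc2]
    have hv : IsUnit ((1 + d) * (1 - d)) := by
      rw [← hcb]
      refine ⟨⟨c.comp b, b'.comp c', ?_, ?_⟩, rfl⟩
      · show (c.comp b).comp (b'.comp c') = 1
        rw [ContinuousLinearMap.comp_assoc, ← ContinuousLinearMap.comp_assoc b b' c', hb1,
          ContinuousLinearMap.one_def, ContinuousLinearMap.id_comp, hc1]
      · show (b'.comp c').comp (c.comp b) = 1
        rw [ContinuousLinearMap.comp_assoc, ← ContinuousLinearMap.comp_assoc c' c b, hc2,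
          ContinuousLinearMap.one_def, ContinuousLinearMap.id_comp, hb2]
    have h1 := ca.isUnit_mul_iff.mp hu
    have h2 := cd.isUnit_mul_iff.mp hv
    exact ⟨h1.1, h1.2, h2.1, h2.2⟩
  · rintro ⟨ha1, ha2, hd1, hd2⟩
    have hu : IsUnit (b.comp c) := by rw [hbc]; exact ha1.mul ha2
    have hv : IsUnit (c.comp b) := by rw [hcb]; exact hd1.mul hd2
    obtain ⟨u, hu⟩ := hu
    obtain ⟨v, hv⟩ := hv
    have huv : (b.comp c).comp (u⁻¹ : (X →L[ℂ] X)ˣ).val = 1 := by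
      rw [← hu, ← ContinuousLinearMap.mul_def, u.mul_inv]
    have huv' : ((u⁻¹ : (X →L[ℂ] X)ˣ).val : X →L[ℂ] X).comp (b.comp c) = 1 := by
      rw [← hu, ← ContinuousLinearMap.mul_def, u.inv_mul]
    have hvv : (c.comp b).comp (v⁻¹ : (Y →L[ℂ] Y)ˣ).val = 1 := by
      rw [← hv, ← ContinuousLinearMap.mul_def, v.mul_inv]
    have hvv' : ((v⁻¹ : (Y →L[ℂ] Y)ˣ).val : Y →L[ℂ] Y).comp (c.comp b) = 1 := by
      rw [← hv, ← ContinuousLinearMap.mul_def, v.inv_mul]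
    refine ⟨⟨c.comp (u⁻¹ : (X →L[ℂ] X)ˣ).val, ?_, ?_⟩, ⟨b.comp (v⁻¹ : (Y →L[ℂ] Y)ˣ).val, ?_, ?_⟩⟩
    · rw [← ContinuousLinearMap.comp_assoc]; exact huv
    · -- (c.comp u⁻¹).comp b = 1 : use left inverse v⁻¹.comp c
      have key : (((v⁻¹ : (Y →L[ℂ] Y)ˣ).val : Y →L[ℂ] Y).comp c).comp (b.comp (c.comp (u⁻¹ : (X →L[ℂ] X)ˣ).val)) =
          ((((v⁻¹ : (Y →L[ℂ] Y)ˣ).val : Y →L[ℂ] Y).comp c).comp b).comp (c.comp (u⁻¹ : (X →L[ℂ] X)ˣ).val) := by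
        ext x; rfl
      have left : (((v⁻¹ : (Y →L[ℂ] Y)ˣ).val : Y →L[ℂ] Y).comp c).comp b = 1 := by
        rw [ContinuousLinearMap.comp_assoc]; exact hvv'
      have right : b.comp (c.comp (u⁻¹ : (X →L[ℂ] X)ˣ).val) = 1 := by
        rw [← ContinuousLinearMap.comp_assoc]; exact huv
      have : c.comp (u⁻¹ : (X →L[ℂ] X)ˣ).val = ((v⁻¹ : (Y →L[ℂ] Y)ˣ).val : Y →L[ℂ] Y).comp c := by
        have := key
        rw [right, left] at this
        simp only [ContinuousLinearMap.one_def, ContinuousLinearMap.comp_id,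
          ContinuousLinearMap.id_comp] at this
        exact this.symm
      rw [this, ContinuousLinearMap.comp_assoc]; exact hvv'
    · rw [← ContinuousLinearMap.comp_assoc]; exact hvv
    · have key : (((u⁻¹ : (X →L[ℂ] X)ˣ).val : X →L[ℂ] X).comp b).comp (c.comp (b.comp (v⁻¹ : (Y →L[ℂ] Y)ˣ).val)) =
          ((((u⁻¹ : (X →L[ℂ] X)ˣ).val : X →L[ℂ] X).comp b).comp c).comp (b.comp (v⁻¹ : (Y →L[ℂ] Y)ˣ).val) := by
        ext x; rfl
      have left : (((u⁻¹ : (X →L[ℂ] X)ˣ).val : X →L[ℂ] X).comp b).comp c = 1 := by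
        rw [ContinuousLinearMap.comp_assoc]; exact huv'
      have right : c.comp (b.comp (v⁻¹ : (Y →L[ℂ] Y)ˣ).val) = 1 := by
        rw [← ContinuousLinearMap.comp_assoc]; exact hvv
      have : b.comp (v⁻¹ : (Y →L[ℂ] Y)ˣ).val = ((u⁻¹ : (X →L[ℂ] X)ˣ).val : X →L[ℂ] X).comp b := by
        rw [right, left] at key
        simp only [ContinuousLinearMap.one_def, ContinuousLinearMap.comp_id,
          ContinuousLinearMap.id_comp] at key
        exact key.symm
      rw [this, ContinuousLinearMap.comp_assoc]; exact huv'
end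

section
/- Let S be the right shift on ℓ²(ℕ) (S(a₁,a₂,…) = (0,a₁,a₂,…)) with adjoint S* the left shift, and let z ∈ ℂ satisfy z² − z + 1 = 0. Then on ℓ²(ℕ) ⊕ ℓ²(ℕ) the operators χ⁺ = [[z S S*, S],[S*, z̄ S*S]] and χ⁻ = [[S*S − z S S*, −S],[−S*, z S*S]] are complementary projections: (χ⁺)² = χ⁺, (χ⁻)² = χ⁻, χ⁺ + χ⁻ = 1. Moreover, writing sgn := χ⁺ − χ⁻ in block form, the diagonal-related operators 1 ± s_rr are invertible on ℓ²(ℕ), while s_r⊥ = 2S* has a one-dimensional null space and s_⊥r = 2S is not surjective. -/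
open ContinuousLinearMap

noncomputable section

set_option maxHeartbeats 2000000

/-- The Hilbert space `ℓ²(ℕ)` of square-summable complex sequences. -/
abbrev Hseq : Type := lp (fun _ : ℕ => ℂ) 2

/-- The `2×2` block operator `[[A,B],[C,D]]` on `E × F`. -/
def blockOp {E F : Type*} [NormedAddCommGroup E] [NormedSpace ℂ E]
    [NormedAddCommGroup F] [NormedSpace ℂ F]
    (A : E →L[ℂ] E) (B : F →L[ℂ] E) (C : E →L[ℂ] F) (D : F →L[ℂ] F) :
    (E × F) →L[ℂ] (E × F) :=
  (A.comp (ContinuousLinearMap.fst ℂ E F) + B.comp (ContinuousLinearMap.snd ℂ E F)).prod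
    (C.comp (ContinuousLinearMap.fst ℂ E F) + D.comp (ContinuousLinearMap.snd ℂ E F))

/-! Block-matrix algebra driven by two facts: the shift is an isometry,
`S*S = 1`, so `SS*` is idempotent; and a root of `z² - z + 1` satisfies `z̄ = 1 - z`
and `z (1 - z) = 1`. With these, `χ⁻ = 1 - χ⁺`, the diagonal `s_rr` becomes the scalar
`1 - 2z`, and the remaining claims concern the shifts themselves: `ker S*` is spanned by
the first basis vector, which is not in the range of `S`. -/

section BlockOp

variable {E F : Type*} [NormedAddCommGroup E] [NormedSpace ℂ E]
    [NormedAddCommGroup F] [NormedSpace ℂ F]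

theorem blockOp_comp (A A' : E →L[ℂ] E) (B B' : F →L[ℂ] E) (C C' : E →L[ℂ] F)
    (D D' : F →L[ℂ] F) :
    (blockOp A B C D).comp (blockOp A' B' C' D') =
      blockOp (A.comp A' + B.comp C') (A.comp B' + B.comp D')
        (C.comp A' + D.comp C') (C.comp B' + D.comp D') := by
  refine ContinuousLinearMap.ext fun x => ?_
  simp only [blockOp, comp_apply, prod_apply, add_apply, coe_fst', coe_snd', map_add]
  refine Prod.ext ?_ ?_ <;> simp <;> abel

theorem blockOp_add (A A' : E →L[ℂ] E) (B B' : F →L[ℂ] E) (C C' : E →L[ℂ] F)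
    (D D' : F →L[ℂ] F) :
    blockOp A B C D + blockOp A' B' C' D' = blockOp (A + A') (B + B') (C + C') (D + D') := by
  refine ContinuousLinearMap.ext fun x => ?_
  simp only [blockOp, comp_apply, prod_apply, add_apply, coe_fst', coe_snd']
  refine Prod.ext ?_ ?_ <;> simp <;> abel

theorem blockOp_sub (A A' : E →L[ℂ] E) (B B' : F →L[ℂ] E) (C C' : E →L[ℂ] F)
    (D D' : F →L[ℂ] F) :
    blockOp A B C D - blockOp A' B' C' D' = blockOp (A - A') (B - B') (C - C') (D - D') := by
  refine ContinuousLinearMap.ext fun x => ?_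
  simp only [blockOp, comp_apply, prod_apply, add_apply, sub_apply, coe_fst', coe_snd']
  refine Prod.ext ?_ ?_ <;> simp <;> abel

theorem blockOp_one :
    blockOp (1 : E →L[ℂ] E) (0 : F →L[ℂ] E) (0 : E →L[ℂ] F) (1 : F →L[ℂ] F) = 1 := by
  refine ContinuousLinearMap.ext fun x => ?_
  simp [blockOp]

end BlockOp

section SixthRootOfUnity

variable {z : ℂ}

theorem conj_eq_one_sub_of_sq_sub_add_one (hz : z ^ 2 - z + 1 = 0) :
    starRingEnd ℂ z = 1 - z := by
  have hz' : starRingEnd ℂ z ^ 2 - starRingEnd ℂ z + 1 = 0 := by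
    simpa using congrArg (starRingEnd ℂ) hz
  have hne : z ≠ starRingEnd ℂ z := by
    intro h
    have him : z.im = 0 := Complex.conj_eq_iff_im.mp h.symm
    have hre := congrArg Complex.re hz
    simp only [Complex.add_re, Complex.sub_re, pow_two, Complex.mul_re, him, Complex.one_re,
      Complex.zero_re] at hre
    nlinarith
  have hprod : (z - starRingEnd ℂ z) * (z + starRingEnd ℂ z - 1) = 0 := by
    linear_combination hz - hz'
  rcases mul_eq_zero.mp hprod with h | h
  · exact absurd (sub_eq_zero.mp h) hne
  · linear_combination h

theorem ne_zero_of_sq_sub_add_one (hz : z ^ 2 - z + 1 = 0) : z ≠ 0 := by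
  rintro rfl
  norm_num at hz

theorem ne_one_of_sq_sub_add_one (hz : z ^ 2 - z + 1 = 0) : z ≠ 1 := by
  rintro rfl
  norm_num at hz

end SixthRootOfUnity

section LeftInverse

variable {E : Type*} [NormedAddCommGroup E] [NormedSpace ℂ E] {S T : E →L[ℂ] E}

theorem isIdempotentElem_blockOp_of_comp_eq_one (hTS : T.comp S = 1) {z : ℂ}
    (hz : z ^ 2 - z + 1 = 0) :
    IsIdempotentElem (blockOp (z • S.comp T) S T ((1 - z) • T.comp S)) := by
  have hTS' : T * S = 1 := hTS
  have hST : (S * T) * (S * T) = S * T := by rw [mul_assoc, ← mul_assoc T, hTS', one_mul]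
  have hSTS : (S * T) * S = S := by rw [mul_assoc, hTS', mul_one]
  have hTST : T * (S * T) = T := by rw [← mul_assoc, hTS', one_mul]
  rw [IsIdempotentElem, mul_def, blockOp_comp]
  simp only [← mul_def, hTS', smul_mul_assoc, mul_smul_comm, hST, hSTS, hTST, mul_one, one_mul]
  congr 1 <;> match_scalars <;> first | ring1 | linear_combination hz

theorem blockOp_add_blockOp_eq_one_of_comp_eq_one (hTS : T.comp S = 1) (z : ℂ) :
    blockOp (z • S.comp T) S T ((1 - z) • T.comp S) +
      blockOp (T.comp S - z • S.comp T) (-S) (-T) (z • T.comp S) = 1 := by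
  rw [blockOp_add, hTS, ← blockOp_one]
  congr 1 <;> module

theorem isUnit_one_add_smul_of_comp_eq_one (hTS : T.comp S = 1) {c : ℂ} (hc : 1 + c ≠ 0) :
    IsUnit (1 + c • T.comp S) := by
  rw [hTS, ← Algebra.algebraMap_eq_smul_one, ← map_one (algebraMap ℂ _), ← map_add]
  exact (isUnit_iff_ne_zero.mpr hc).map _

end LeftInverse

def IsRightShift (S : Hseq →L[ℂ] Hseq) : Prop :=
  ∀ (f : Hseq) (m : ℕ), (S f : ℕ → ℂ) m = if m = 0 then 0 else f (m - 1)

theorem coe_apply_eq_inner_single (f : Hseq) (n : ℕ) :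
    (f : ℕ → ℂ) n = inner ℂ (lp.single 2 n (1 : ℂ)) f := by
  simp [lp.inner_single_left, RCLike.inner_apply]

namespace IsRightShift

variable {S : Hseq →L[ℂ] Hseq}

theorem apply_single (hS : IsRightShift S) (n : ℕ) :
    S (lp.single 2 n 1) = lp.single 2 (n + 1) 1 := by
  refine lp.ext (funext fun m => ?_)
  rw [hS]
  rcases m with _ | k
  · simp [lp.single_apply]
  · simp [lp.single_apply, Pi.single_apply]

theorem adjoint_apply (hS : IsRightShift S) (f : Hseq) (n : ℕ) :
    (adjoint S f : ℕ → ℂ) n = f (n + 1) := by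
  rw [coe_apply_eq_inner_single, adjoint_inner_right, hS.apply_single,
    ← coe_apply_eq_inner_single]

theorem adjoint_comp_self (hS : IsRightShift S) : (adjoint S).comp S = 1 := by
  refine ContinuousLinearMap.ext fun f => lp.ext (funext fun n => ?_)
  simp [hS.adjoint_apply, hS _ (n + 1)]

theorem ker_adjoint (hS : IsRightShift S) :
    LinearMap.ker ((adjoint S : Hseq →L[ℂ] Hseq) : Hseq →ₗ[ℂ] Hseq) =
      Submodule.span ℂ {lp.single 2 0 1} := by
  ext f
  simp only [LinearMap.mem_ker, coe_coe, Submodule.mem_span_singleton]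
  constructor
  · intro hf
    refine ⟨f 0, lp.ext (funext fun m => ?_)⟩
    rcases m with _ | k
    · simp
    · have hk := congrArg (fun g : Hseq => (g : ℕ → ℂ) k) hf
      simp only [hS.adjoint_apply] at hk
      simp [hk, lp.single_apply]
  · rintro ⟨c, rfl⟩
    refine lp.ext (funext fun m => ?_)
    simp [hS.adjoint_apply, lp.single_apply]

end IsRightShift

/-- Let `S` be the right shift on `ℓ²(ℕ)` (with adjoint the left shift) and let
`z² - z + 1 = 0`.  Then `χ⁺ = [[zSS*, S],[S*, z̄S*S]]` and
`χ⁻ = [[S*S - zSS*, -S],[-S*, zS*S]]` are complementary projections on `ℓ² ⊕ ℓ²`;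
writing `sgn = χ⁺ - χ⁻ = [[2zSS* - S*S, 2S],[2S*, (z̄-z)S*S]]`, the operators `1 ± s_rr`
are invertible, while `s_r⊥ = 2S*` has a one-dimensional null space and `s_⊥r = 2S` is
not surjective. -/
theorem stmt8 (S : Hseq →L[ℂ] Hseq)
    (hS : ∀ (f : Hseq) (m : ℕ), (S f : ∀ _ : ℕ, ℂ) m = if m = 0 then 0 else f (m - 1))
    (z : ℂ) (hz : z ^ 2 - z + 1 = 0) :
    (blockOp (z • (S.comp (adjoint S))) S (adjoint S)
        ((starRingEnd ℂ z) • ((adjoint S).comp S))).comp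
      (blockOp (z • (S.comp (adjoint S))) S (adjoint S)
        ((starRingEnd ℂ z) • ((adjoint S).comp S)))
      = blockOp (z • (S.comp (adjoint S))) S (adjoint S)
        ((starRingEnd ℂ z) • ((adjoint S).comp S)) ∧
    (blockOp ((adjoint S).comp S - z • (S.comp (adjoint S))) (-S) (-(adjoint S))
        (z • ((adjoint S).comp S))).comp
      (blockOp ((adjoint S).comp S - z • (S.comp (adjoint S))) (-S) (-(adjoint S))
        (z • ((adjoint S).comp S)))
      = blockOp ((adjoint S).comp S - z • (S.comp (adjoint S))) (-S) (-(adjoint S))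
        (z • ((adjoint S).comp S)) ∧
    blockOp (z • (S.comp (adjoint S))) S (adjoint S) ((starRingEnd ℂ z) • ((adjoint S).comp S)) +
        blockOp ((adjoint S).comp S - z • (S.comp (adjoint S))) (-S) (-(adjoint S))
          (z • ((adjoint S).comp S)) = 1 ∧
    blockOp (z • (S.comp (adjoint S))) S (adjoint S) ((starRingEnd ℂ z) • ((adjoint S).comp S)) -
        blockOp ((adjoint S).comp S - z • (S.comp (adjoint S))) (-S) (-(adjoint S))
          (z • ((adjoint S).comp S))
      = blockOp ((2 : ℂ) • (z • (S.comp (adjoint S))) - (adjoint S).comp S) ((2 : ℂ) • S)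
          ((2 : ℂ) • adjoint S) ((starRingEnd ℂ z - z) • ((adjoint S).comp S)) ∧
    IsUnit ((1 : Hseq →L[ℂ] Hseq) + (starRingEnd ℂ z - z) • ((adjoint S).comp S)) ∧
    IsUnit ((1 : Hseq →L[ℂ] Hseq) - (starRingEnd ℂ z - z) • ((adjoint S).comp S)) ∧
    Module.finrank ℂ (LinearMap.ker (((2 : ℂ) • adjoint S : Hseq →L[ℂ] Hseq) : Hseq →ₗ[ℂ] Hseq)) = 1 ∧
    ¬ Function.Surjective ((2 : ℂ) • S) := by
  have hshift : IsRightShift S := hS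
  have hTS := hshift.adjoint_comp_self
  have hsum := blockOp_add_blockOp_eq_one_of_comp_eq_one hTS z
  have hplus := isIdempotentElem_blockOp_of_comp_eq_one hTS hz
  rw [conj_eq_one_sub_of_sq_sub_add_one hz]
  refine ⟨hplus, ?_, hsum, ?_, ?_, ?_, ?_, ?_⟩
  · rw [eq_sub_of_add_eq' hsum]
    exact hplus.one_sub
  · rw [blockOp_sub]
    congr 1 <;> module
  · exact isUnit_one_add_smul_of_comp_eq_one hTS fun h =>
      ne_one_of_sq_sub_add_one hz (by linear_combination -h / 2)
  · rw [sub_eq_add_neg, ← neg_smul]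
    exact isUnit_one_add_smul_of_comp_eq_one hTS fun h =>
      ne_zero_of_sq_sub_add_one hz (by linear_combination h / 2)
  · rw [toLinearMap_smul, LinearMap.ker_smul _ _ two_ne_zero, hshift.ker_adjoint]
    exact finrank_span_singleton fun h => by
      simpa using congrArg (fun g : Hseq => (g : ℕ → ℂ) 0) h
  · intro h
    obtain ⟨f, hf⟩ := h (lp.single 2 0 1)
    simpa [hS f 0] using congrArg (fun g : Hseq => (g : ℕ → ℂ) 0) hf
end
end

section
/- Let η: ℝ → [0,1] be Lipschitz with Lipschitz constant L and let K(t,s) be a kernel satisfying |K(t,s)| ≤ C |η(t)−η(s)| |t−s|^{-3/2} for all t ≠ s. If additionally ‖η'‖_∞ · h̃ ≤ c₀ for some h̃ > 0 (i.e., L ≤ c₀/h̃), then |K(t,s)| ≲ h̃^{-3/2} φ((t−s)/h̃) where φ(t) = min{|t|^{-1/2}, |t|^{-3/2}}, and consequently the integral operator with kernel K is bounded from L²(ℝ) to L^p(ℝ) for every p ∈ [2, ∞) with norm ≲ h̃^{-1/2 − (1/2 − 1/p)}, by Young's inequality. -/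
/-!
Since `η` takes values in `[0, 1]` and is `L`-Lipschitz, `|η t - η s| ≤ min 1 (L |t - s|)`, and
`L ≤ c₀ / h̃` turns the hypothesis on `K` into
`|K(t,s)| ≤ C max(c₀, 1) h̃^(-3/2) φ((t-s)/h̃)`. The operator is therefore dominated by
convolution with a rescaled `φ`, and Young's inequality with `1/p + 1 = 1/r + 1/2`, i.e.
`r = 2p/(p+2) ∈ [1, 2)`, applies because `φ ∈ L^r` exactly for `2/3 < r < 2`. The power of `h̃`
comes from `‖φ(·/h̃)‖_r = h̃^(1/r) ‖φ‖_r`.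
-/

open MeasureTheory Real
open scoped ENNReal

lemma one_div_le_of_young_exponents {p q r : ℝ} (hr : 1 ≤ r) (hq : 1 ≤ q)
    (hpqr : 1 / p + 1 = 1 / r + 1 / q) : 1 / p ≤ 1 / r ∧ 1 / p ≤ 1 / q := by
  have hr' : 1 / r ≤ 1 := (div_le_one (by linarith)).2 hr
  have hq' : 1 / q ≤ 1 := (div_le_one (by linarith)).2 hq
  constructor <;> linarith

section Young

variable {G : Type*} [MeasurableSpace G] [AddCommGroup G] [MeasurableAdd₂ G] [MeasurableNeg G]
  {μ : Measure G} [μ.IsAddLeftInvariant] [μ.IsNegInvariant]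
  {F H : G → ℝ≥0∞} {p q r : ℝ}

/-- Hölder's inequality applied to the factorization
`F(t-s) H(s) = (F(t-s)^r H(s)^q)^(1/p) · F(t-s)^(1-r/p) · H(s)^(1-q/p)`. -/
lemma lintegral_sub_mul_le_holder (hF : Measurable F) (hH : Measurable H) (hp : 0 < p)
    (hr : 1 ≤ r) (hq : 1 ≤ q) (hpqr : 1 / p + 1 = 1 / r + 1 / q) (t : G) :
    ∫⁻ s, F (t - s) * H s ∂μ ≤
      (∫⁻ s, F (t - s) ^ r * H s ^ q ∂μ) ^ (1 / p) *
        ((∫⁻ u, F u ^ r ∂μ) ^ (1 / r - 1 / p) * (∫⁻ s, H s ^ q ∂μ) ^ (1 / q - 1 / p)) := by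
  obtain ⟨ha, hb⟩ := one_div_le_of_young_exponents hr hq hpqr
  rw [← sub_nonneg] at ha hb
  have hFt : Measurable fun s => F (t - s) := hF.comp (measurable_const.sub measurable_id)
  have factor : ∀ x y : ℝ≥0∞, x * y =
      (x ^ r * y ^ q) ^ (1 / p) * ((x ^ r) ^ (1 / r - 1 / p) * (y ^ q) ^ (1 / q - 1 / p)) := by
    intro x y
    rw [ENNReal.mul_rpow_of_nonneg _ _ (by positivity), mul_mul_mul_comm,
      ← ENNReal.rpow_add_of_nonneg _ _ (by positivity) ha,
      ← ENNReal.rpow_add_of_nonneg _ _ (by positivity) hb, ← ENNReal.rpow_mul,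
      ← ENNReal.rpow_mul]
    rw [show r * (1 / p + (1 / r - 1 / p)) = 1 by field_simp; ring,
      show q * (1 / p + (1 / q - 1 / p)) = 1 by field_simp; ring, ENNReal.rpow_one,
      ENNReal.rpow_one]
  have holder := ENNReal.lintegral_mul_prod_norm_pow_le (μ := μ) Finset.univ
    (g := fun s => F (t - s) ^ r * H s ^ q) (f := ![fun s => F (t - s) ^ r, fun s => H s ^ q])
    ((hFt.pow_const r).mul (hH.pow_const q)).aemeasurable
    (by
      intro i _
      fin_cases i
      exacts [(hFt.pow_const r).aemeasurable, (hH.pow_const q).aemeasurable])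
    (1 / p) (p := ![1 / r - 1 / p, 1 / q - 1 / p])
    (by simp only [Fin.sum_univ_two, Matrix.cons_val_zero, Matrix.cons_val_one]; linarith)
    (by positivity)
    (by
      intro i _
      fin_cases i
      exacts [ha, hb])
  simp only [Fin.prod_univ_two, Matrix.cons_val_zero, Matrix.cons_val_one] at holder
  rw [lintegral_sub_left_eq_self (fun u => F u ^ r) t] at holder
  simpa only [← factor] using holder

/-- Young's convolution inequality `‖F ⋆ H‖_p ≤ ‖F‖_r ‖H‖_q`, raised to the power `p`. -/
theorem lintegral_convolution_rpow_le [SFinite μ] (hF : Measurable F) (hH : Measurable H)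
    (hp : 0 < p) (hr : 1 ≤ r) (hq : 1 ≤ q) (hpqr : 1 / p + 1 = 1 / r + 1 / q) :
    ∫⁻ t, (∫⁻ s, F (t - s) * H s ∂μ) ^ p ∂μ ≤
      (∫⁻ u, F u ^ r ∂μ) ^ (p / r) * (∫⁻ s, H s ^ q ∂μ) ^ (p / q) := by
  set X := ∫⁻ u, F u ^ r ∂μ
  set Y := ∫⁻ s, H s ^ q ∂μ
  have hprod : Measurable (Function.uncurry fun t s => F (t - s) ^ r * H s ^ q) :=
    ((hF.comp (measurable_fst.sub measurable_snd)).pow_const r).mul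
      ((hH.comp measurable_snd).pow_const q)
  have tonelli : ∫⁻ t, ∫⁻ s, F (t - s) ^ r * H s ^ q ∂μ ∂μ = X * Y := by
    rw [lintegral_lintegral_swap hprod.aemeasurable, ← lintegral_const_mul _ (hH.pow_const q)]
    refine lintegral_congr fun s => ?_
    rw [lintegral_mul_const (f := fun u => F (u - s) ^ r) _ (by fun_prop),
      lintegral_sub_right_eq_self (fun u => F u ^ r) s, mul_comm]
  calc ∫⁻ t, (∫⁻ s, F (t - s) * H s ∂μ) ^ p ∂μ
      ≤ ∫⁻ t, ((∫⁻ s, F (t - s) ^ r * H s ^ q ∂μ) ^ (1 / p) *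
          (X ^ (1 / r - 1 / p) * Y ^ (1 / q - 1 / p))) ^ p ∂μ :=
        lintegral_mono fun t => ENNReal.rpow_le_rpow
          (lintegral_sub_mul_le_holder hF hH hp hr hq hpqr t) hp.le
    _ = (∫⁻ t, ∫⁻ s, F (t - s) ^ r * H s ^ q ∂μ ∂μ) *
          (X ^ (1 / r - 1 / p) * Y ^ (1 / q - 1 / p)) ^ p := by
        rw [← lintegral_mul_const _ hprod.lintegral_prod_right]
        refine lintegral_congr fun t => ?_
        rw [ENNReal.mul_rpow_of_nonneg _ _ hp.le, ← ENNReal.rpow_mul,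
          one_div_mul_cancel hp.ne', ENNReal.rpow_one]
    _ = X ^ (p / r) * Y ^ (p / q) := by
        rw [tonelli]
        obtain ⟨ha, hb⟩ := one_div_le_of_young_exponents hr hq hpqr
        rw [← sub_nonneg] at ha hb
        calc (X * Y) * (X ^ (1 / r - 1 / p) * Y ^ (1 / q - 1 / p)) ^ p
            = X ^ (1 + (1 / r - 1 / p) * p) * Y ^ (1 + (1 / q - 1 / p) * p) := by
              rw [ENNReal.mul_rpow_of_nonneg _ _ hp.le, ← ENNReal.rpow_mul, ← ENNReal.rpow_mul,
                ENNReal.rpow_add_of_nonneg _ _ zero_le_one (by positivity),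
                ENNReal.rpow_add_of_nonneg _ _ zero_le_one (by positivity), ENNReal.rpow_one,
                ENNReal.rpow_one, mul_mul_mul_comm]
          _ = X ^ (p / r) * Y ^ (p / q) := by
              congr 2 <;> field_simp <;> ring

theorem eLpNorm_integral_kernel_mul_le {𝕜 : Type*} [RCLike 𝕜] [SFinite μ]
    {K : G → G → 𝕜} {k : G → ℝ≥0∞} (hk : Measurable k)
    (hK : ∀ t, ∀ᵐ s ∂μ, ‖K t s‖ₑ ≤ k (t - s)) {f : G → 𝕜} (hf : AEStronglyMeasurable f μ)
    (hp : 0 < p) (hr : 1 ≤ r) (hq : 1 ≤ q) (hpqr : 1 / p + 1 = 1 / r + 1 / q) :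
    eLpNorm (fun t => ∫ s, K t s * f s ∂μ) (ENNReal.ofReal p) μ ≤
      (∫⁻ u, k u ^ r ∂μ) ^ (1 / r) * eLpNorm f (ENNReal.ofReal q) μ := by
  set H : G → ℝ≥0∞ := fun s => ‖hf.mk f s‖ₑ
  have hH : Measurable H := hf.stronglyMeasurable_mk.measurable.enorm
  have pointwise : ∀ t, ‖∫ s, K t s * f s ∂μ‖ₑ ≤ ∫⁻ s, k (t - s) * H s ∂μ := fun t =>
    (enorm_integral_le_lintegral_enorm _).trans <| lintegral_mono_ae <| by
      filter_upwards [hK t, hf.ae_eq_mk] with s hKs hfs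
      rw [enorm_mul, hfs]
      exact mul_le_mul_left hKs _
  have hfH : eLpNorm f (ENNReal.ofReal q) μ = (∫⁻ s, H s ^ q ∂μ) ^ (1 / q) := by
    rw [eLpNorm_congr_ae hf.ae_eq_mk, eLpNorm_eq_lintegral_rpow_enorm_toReal
      (ENNReal.ofReal_pos.2 (by linarith)).ne' ENNReal.ofReal_ne_top,
      ENNReal.toReal_ofReal (by linarith)]
  rw [hfH, eLpNorm_eq_lintegral_rpow_enorm_toReal (ENNReal.ofReal_pos.2 hp).ne'
    ENNReal.ofReal_ne_top, ENNReal.toReal_ofReal hp.le]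
  calc (∫⁻ t, ‖∫ s, K t s * f s ∂μ‖ₑ ^ p ∂μ) ^ (1 / p)
      ≤ (∫⁻ t, (∫⁻ s, k (t - s) * H s ∂μ) ^ p ∂μ) ^ (1 / p) := by
        gcongr with t
        exact pointwise t
    _ ≤ ((∫⁻ u, k u ^ r ∂μ) ^ (p / r) * (∫⁻ s, H s ^ q ∂μ) ^ (p / q)) ^ (1 / p) := by
        gcongr
        exact lintegral_convolution_rpow_le hk hH hp hr hq hpqr
    _ = (∫⁻ u, k u ^ r ∂μ) ^ (1 / r) * (∫⁻ s, H s ^ q ∂μ) ^ (1 / q) := by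
        rw [ENNReal.mul_rpow_of_nonneg _ _ (by positivity), ← ENNReal.rpow_mul,
          ← ENNReal.rpow_mul]
        congr 2 <;> field_simp

end Young

noncomputable def kernelProfile (u : ℝ) : ℝ := min (|u| ^ (-(1 : ℝ) / 2)) (|u| ^ (-(3 : ℝ) / 2))

lemma kernelProfile_nonneg (u : ℝ) : 0 ≤ kernelProfile u :=
  le_min (rpow_nonneg (abs_nonneg u) _) (rpow_nonneg (abs_nonneg u) _)

@[fun_prop]
lemma measurable_kernelProfile : Measurable kernelProfile :=
  (measurable_abs.pow_const _).min (measurable_abs.pow_const _)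

lemma integrable_kernelProfile_rpow {r : ℝ} (hr : 2 / 3 < r) (hr' : r < 2) :
    Integrable (fun u => kernelProfile u ^ r) := by
  have radial := integrable_fun_norm_addHaar (volume : Measure ℝ)
    (f := fun y => min (y ^ (-(1 : ℝ) / 2)) (y ^ (-(3 : ℝ) / 2)) ^ r)
  simp only [Real.norm_eq_abs, Module.finrank_self, Nat.sub_self, pow_zero, one_smul] at radial
  refine radial.2 ?_
  rw [← Set.Ioc_union_Ioi_eq_Ioi zero_le_one]
  refine IntegrableOn.union ?_ ?_
  · refine (intervalIntegral.intervalIntegrable_rpow' (r := -(1 : ℝ) / 2 * r)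
      (by linarith)).1.congr_fun (fun y hy => ?_) measurableSet_Ioc
    rw [min_eq_left (rpow_le_rpow_of_exponent_ge hy.1 hy.2 (by norm_num)), ← rpow_mul hy.1.le]
  · refine (integrableOn_Ioi_rpow_of_lt (a := -(3 : ℝ) / 2 * r) (by linarith)
      zero_lt_one).congr_fun
      (fun y hy => ?_) measurableSet_Ioi
    rw [min_eq_right (rpow_le_rpow_of_exponent_le (le_of_lt hy) (by norm_num)),
      ← rpow_mul (by linarith [hy.out])]

lemma kernelProfile_div {h : ℝ} (hh : 0 < h) (d : ℝ) :
    h ^ (-(3 : ℝ) / 2) * kernelProfile (d / h) =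
      min (h⁻¹ * |d| ^ (-(1 : ℝ) / 2)) (|d| ^ (-(3 : ℝ) / 2)) := by
  rw [kernelProfile, abs_div, abs_of_pos hh, div_rpow (abs_nonneg d) hh.le,
    div_rpow (abs_nonneg d) hh.le, mul_min_of_nonneg _ _ (rpow_nonneg hh.le _)]
  congr 1
  · rw [mul_div_left_comm, ← rpow_sub hh, mul_comm]
    norm_num [rpow_neg_one]
  · rw [mul_div_left_comm, div_self (rpow_pos_of_pos hh _).ne', mul_one]

lemma div_rpow_three_halves_le_kernelProfile {C c₀ L h a d : ℝ} (hC : 0 ≤ C) (hh : 0 < h)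
    (hd : d ≠ 0) (ha : a ≤ 1) (haL : a ≤ L * |d|) (hLh : L * h ≤ c₀) :
    C * a / |d| ^ ((3 : ℝ) / 2) ≤ C * max c₀ 1 * h ^ (-(3 : ℝ) / 2) * kernelProfile (d / h) := by
  have hd' : 0 < |d| := abs_pos.2 hd
  rw [mul_assoc (C * _), kernelProfile_div hh, mul_div_assoc, mul_assoc]
  gcongr
  rw [mul_min_of_nonneg _ _ (by positivity)]
  refine le_min ?_ ?_
  · calc a / |d| ^ ((3 : ℝ) / 2) ≤ L * |d| / |d| ^ ((3 : ℝ) / 2) := by gcongr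
      _ = L * |d| ^ (-(1 : ℝ) / 2) := by
        rw [mul_div_assoc]
        congr 1
        rw [div_eq_iff (by positivity), ← rpow_add hd']
        norm_num
      _ ≤ max c₀ 1 * (h⁻¹ * |d| ^ (-(1 : ℝ) / 2)) := by
        rw [← mul_assoc]
        gcongr
        calc L ≤ c₀ * h⁻¹ := by rw [← div_eq_mul_inv, le_div_iff₀ hh]; exact hLh
          _ ≤ max c₀ 1 * h⁻¹ := by gcongr; exact le_max_left _ _
  · calc a / |d| ^ ((3 : ℝ) / 2) ≤ 1 / |d| ^ ((3 : ℝ) / 2) := by gcongr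
      _ = |d| ^ (-(3 : ℝ) / 2) := by rw [one_div, ← rpow_neg hd'.le]; norm_num
      _ ≤ max c₀ 1 * |d| ^ (-(3 : ℝ) / 2) :=
        le_mul_of_one_le_left (by positivity) (le_max_right _ _)

lemma lintegral_comp_div_of_pos {F : ℝ → ℝ≥0∞} (hF : Measurable F) {h : ℝ} (hh : 0 < h) :
    ∫⁻ u, F (u / h) = ENNReal.ofReal h * ∫⁻ u, F u := by
  simp_rw [div_eq_inv_mul]
  rw [← lintegral_map hF (measurable_const_mul h⁻¹),
    Real.map_volume_mul_left (inv_ne_zero hh.ne'), inv_inv, abs_of_pos hh,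
    lintegral_smul_measure, smul_eq_mul]

lemma lintegral_ofReal_mul_comp_div_rpow {ψ : ℝ → ℝ} (hψ : Measurable ψ) {A h r : ℝ}
    (hA : 0 ≤ A) (hh : 0 < h) (hr : 0 < r) :
    (∫⁻ u, ENNReal.ofReal (A * ψ (u / h)) ^ r) ^ (1 / r) =
      ENNReal.ofReal (A * h ^ (1 / r)) * (∫⁻ u, ENNReal.ofReal (ψ u) ^ r) ^ (1 / r) := by
  simp_rw [ENNReal.ofReal_mul hA, ENNReal.mul_rpow_of_nonneg _ _ hr.le]
  rw [lintegral_const_mul _ (by fun_prop),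
    lintegral_comp_div_of_pos (F := fun u => ENNReal.ofReal (ψ u) ^ r) (by fun_prop) hh,
    ENNReal.mul_rpow_of_nonneg _ _ (by positivity),
    ENNReal.mul_rpow_of_nonneg _ _ (by positivity), ← ENNReal.rpow_mul,
    mul_one_div_cancel hr.ne', ENNReal.rpow_one, ← mul_assoc,
    ENNReal.ofReal_rpow_of_pos hh]

lemma norm_le_kernelProfile_of_lipschitz {E : Type*} [Norm E] {C c₀ L h : ℝ} {η : ℝ → ℝ}
    {K : ℝ → ℝ → E} (hC : 0 ≤ C) (hh : 0 < h) (hL : 0 ≤ L)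
    (hlip : LipschitzWith (Real.toNNReal L) η)
    (hη : ∀ t, η t ∈ Set.Icc (0 : ℝ) 1)
    (hK : ∀ t s, t ≠ s → ‖K t s‖ ≤ C * |η t - η s| / |t - s| ^ ((3 : ℝ) / 2))
    (hLh : L * h ≤ c₀) {t s : ℝ} (hts : t ≠ s) :
    ‖K t s‖ ≤ C * max c₀ 1 * h ^ (-(3 : ℝ) / 2) * kernelProfile ((t - s) / h) := by
  refine (hK t s hts).trans
    (div_rpow_three_halves_le_kernelProfile hC hh (sub_ne_zero.2 hts) ?_ ?_ hLh)
  · exact abs_sub_le_of_nonneg_of_le (hη t).1 (hη t).2 (hη s).1 (hη s).2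
  · simpa only [Real.dist_eq, Real.coe_toNNReal L hL] using hlip.dist_le_mul t s

lemma eLpNorm_integral_mul_le_of_norm_le_kernelProfile {𝕜 : Type*} [RCLike 𝕜]
    {K : ℝ → ℝ → 𝕜} {f : ℝ → 𝕜} {A h p q r : ℝ} (hA : 0 ≤ A) (hh : 0 < h)
    (hK : ∀ t s, t ≠ s → ‖K t s‖ ≤ A * kernelProfile ((t - s) / h))
    (hf : AEStronglyMeasurable f) (hp : 0 < p) (hr : 1 ≤ r) (hq : 1 ≤ q)
    (hpqr : 1 / p + 1 = 1 / r + 1 / q) :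
    eLpNorm (fun t => ∫ s, K t s * f s) (ENNReal.ofReal p) ≤
      ENNReal.ofReal (A * h ^ (1 / r)) *
        (∫⁻ u, ENNReal.ofReal (kernelProfile u) ^ r) ^ (1 / r) * eLpNorm f (ENNReal.ofReal q) := by
  have hK_ae : ∀ t, ∀ᵐ s, ‖K t s‖ₑ ≤ ENNReal.ofReal (A * kernelProfile ((t - s) / h)) :=
    fun t => (measure_eq_zero_iff_ae_notMem.1 (measure_singleton t)).mono fun s hs => by
      rw [← ofReal_norm]
      exact ENNReal.ofReal_le_ofReal (hK t s fun hts => hs hts.symm)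
  rw [← lintegral_ofReal_mul_comp_div_rpow measurable_kernelProfile hA hh (by linarith)]
  exact eLpNorm_integral_kernel_mul_le (by fun_prop) hK_ae hf hp hr hq hpqr

theorem stmt14_general (C c₀ p : ℝ) (hC : 0 < C) (hp : 2 ≤ p) :
    ∃ C' : ℝ, 0 < C' ∧
      ∀ (η : ℝ → ℝ) (L htil : ℝ) (K : ℝ → ℝ → ℂ),
        0 < htil → 0 ≤ L → LipschitzWith (Real.toNNReal L) η →
        (∀ t, η t ∈ Set.Icc (0 : ℝ) 1) →
        (∀ t s, t ≠ s → ‖K t s‖ ≤ C * |η t - η s| / |t - s| ^ ((3 : ℝ) / 2)) →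
        L * htil ≤ c₀ →
        ((∀ t s : ℝ, t ≠ s →
            ‖K t s‖ ≤ C' * htil ^ (-(3 : ℝ) / 2) *
              min (|(t - s) / htil| ^ (-(1 : ℝ) / 2)) (|(t - s) / htil| ^ (-(3 : ℝ) / 2))) ∧
          ∀ f : ℝ → ℂ, MemLp f 2 volume →
            eLpNorm (fun t => ∫ s, K t s * f s) (ENNReal.ofReal p) volume ≤
              ENNReal.ofReal (C' * htil ^ (-(1 : ℝ) / 2 - ((1 : ℝ) / 2 - 1 / p))) *
                eLpNorm f 2 volume) := by
  set r := 2 * p / (p + 2)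
  have hr1 : 1 ≤ r := by rw [le_div_iff₀ (by linarith)]; linarith
  have hr2 : r < 2 := by rw [div_lt_iff₀ (by linarith)]; linarith
  have hpr : 1 / p + 1 = 1 / r + 1 / 2 := by simp only [r]; field_simp; ring
  have hI : ∫⁻ u, ENNReal.ofReal (kernelProfile u) ^ r ≠ ⊤ := by
    simp_rw [ENNReal.ofReal_rpow_of_nonneg (kernelProfile_nonneg _) (by linarith : 0 ≤ r)]
    exact (integrable_kernelProfile_rpow (by linarith) hr2).lintegral_lt_top.ne
  set J := ((∫⁻ u, ENNReal.ofReal (kernelProfile u) ^ r) ^ (1 / r)).toReal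
  have hJ : (∫⁻ u, ENNReal.ofReal (kernelProfile u) ^ r) ^ (1 / r) = ENNReal.ofReal J :=
    (ENNReal.ofReal_toReal (ENNReal.rpow_ne_top_of_nonneg (by positivity) hI)).symm
  set B := C * max c₀ 1
  refine ⟨B * max 1 J, by positivity, fun η L htil K hh hL hlip hη hK hLh => ?_⟩
  have pointwise : ∀ t s, t ≠ s →
      ‖K t s‖ ≤ B * htil ^ (-(3 : ℝ) / 2) * kernelProfile ((t - s) / htil) := fun t s hts =>
    norm_le_kernelProfile_of_lipschitz hC.le hh hL hlip hη hK hLh hts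
  refine ⟨fun t s hts => (pointwise t s hts).trans ?_, fun f hf => ?_⟩
  · exact mul_le_mul_of_nonneg_right (mul_le_mul_of_nonneg_right
      (le_mul_of_one_le_right (by positivity) (le_max_left 1 J)) (by positivity))
      (kernelProfile_nonneg _)
  calc _ ≤ ENNReal.ofReal (B * htil ^ (-(3 : ℝ) / 2) * htil ^ (1 / r)) * ENNReal.ofReal J *
          eLpNorm f (ENNReal.ofReal 2) := by
        rw [← hJ]
        exact eLpNorm_integral_mul_le_of_norm_le_kernelProfile (by positivity) hh pointwise hf.1
          (by linarith) hr1 one_le_two hpr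
    _ ≤ _ := by
        rw [← ENNReal.ofReal_mul (by positivity), ENNReal.ofReal_ofNat, mul_assoc B,
          ← rpow_add hh,
          show -(3 : ℝ) / 2 + 1 / r = -(1 : ℝ) / 2 - ((1 : ℝ) / 2 - 1 / p) by linarith,
          mul_right_comm]
        gcongr
        exact le_max_right 1 J

/-- Commutator-type kernel bounds: if `η : ℝ → [0,1]` is Lipschitz with constant `L`,
`|K(t,s)| ≤ C|η(t)-η(s)|/|t-s|^{3/2}` for `t ≠ s`, and `L·h̃ ≤ c₀`, then
`|K(t,s)| ≲ h̃^{-3/2} φ((t-s)/h̃)` with `φ(t) = min{|t|^{-1/2}, |t|^{-3/2}}`, and the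
integral operator with kernel `K` maps `L²(ℝ)` to `L^p(ℝ)` for every `p ∈ [2,∞)` with
norm `≲ h̃^{-1/2-(1/2-1/p)}` (constants depending only on `C`, `c₀` and `p`). -/
theorem stmt14 (C c₀ p : ℝ) (hC : 0 < C) (hc₀ : 0 < c₀) (hp : 2 ≤ p) :
    ∃ C' : ℝ, 0 < C' ∧
      ∀ (η : ℝ → ℝ) (L htil : ℝ) (K : ℝ → ℝ → ℂ),
        0 < htil → 0 ≤ L → LipschitzWith (Real.toNNReal L) η →
        (∀ t, η t ∈ Set.Icc (0 : ℝ) 1) →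
        (∀ t s, t ≠ s → ‖K t s‖ ≤ C * |η t - η s| / |t - s| ^ ((3 : ℝ) / 2)) →
        L * htil ≤ c₀ →
        ((∀ t s : ℝ, t ≠ s →
            ‖K t s‖ ≤ C' * htil ^ (-(3 : ℝ) / 2) *
              min (|(t - s) / htil| ^ (-(1 : ℝ) / 2)) (|(t - s) / htil| ^ (-(3 : ℝ) / 2))) ∧
          ∀ f : ℝ → ℂ, MemLp f 2 volume →
            eLpNorm (fun t => ∫ s, K t s * f s) (ENNReal.ofReal p) volume ≤
              ENNReal.ofReal (C' * htil ^ (-(1 : ℝ) / 2 - ((1 : ℝ) / 2 - 1 / p))) *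
                eLpNorm f 2 volume) :=
  stmt14_general C c₀ p hC hp
end

section
/- The pointwise transformation A ↦ Â on block matrices A = [[A_⊥⊥, A_⊥∥],[A_∥⊥, A_∥∥]] (with A_⊥⊥ an invertible scalar or invertible square block), defined by Â = [[1, 0],[A_∥⊥, A_∥∥]] · [[A_⊥⊥, A_⊥∥],[0, 1]]^{-1} = [[A_⊥⊥^{-1}, −A_⊥⊥^{-1}A_⊥∥],[A_∥⊥A_⊥⊥^{-1}, A_∥∥ − A_∥⊥A_⊥⊥^{-1}A_⊥∥]], is well-defined on the set of matrices A ∈ ℂ^{(n+1)×(n+1)} satisfying the strict accretivity condition Re(Aξ·ξ̄) ≥ κ|ξ|² for some κ > 0, is a self-inverse bijection of this set onto itself (with possibly different accretivity constants controlled by κ and ‖A‖). -/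
open Matrix

noncomputable section

/-- The pointwise transformation `A ↦ Â` on `(1+n)×(1+n)` block matrices (indices
`Unit ⊕ Fin n`, the first block being the `⊥` direction):
`Â = [[A⊥⊥⁻¹, -A⊥⊥⁻¹A⊥∥],[A∥⊥A⊥⊥⁻¹, A∥∥ - A∥⊥A⊥⊥⁻¹A⊥∥]]`. -/
def hatMatrix {n : ℕ} (A : Matrix (Unit ⊕ Fin n) (Unit ⊕ Fin n) ℂ) :
    Matrix (Unit ⊕ Fin n) (Unit ⊕ Fin n) ℂ :=
  Matrix.fromBlocks (A.toBlocks₁₁)⁻¹ (-(A.toBlocks₁₁)⁻¹ * A.toBlocks₁₂)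
    (A.toBlocks₂₁ * (A.toBlocks₁₁)⁻¹)
    (A.toBlocks₂₂ - A.toBlocks₂₁ * (A.toBlocks₁₁)⁻¹ * A.toBlocks₁₂)

/-- Strict accretivity with constant `κ`: `Re(Aξ·ξ̄) ≥ κ|ξ|²` for all `ξ ∈ ℂ^{1+n}`. -/
def StrictlyAccretive (n : ℕ) (κ : ℝ) (A : Matrix (Unit ⊕ Fin n) (Unit ⊕ Fin n) ℂ) : Prop :=
  ∀ ξ : (Unit ⊕ Fin n) → ℂ,
    κ * ∑ i, ‖ξ i‖ ^ 2 ≤ (dotProduct (A.mulVec ξ) (star ξ)).re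

/-! `A ↦ Â` is the principal pivot transform with respect to the `⊥` block: if `ξ = (x, y)` and
`Aξ = (u, v)`, then `Â (u, y) = (x, v)`. So `Â` arises from `A` by exchanging the `⊥` components of
input and output, and exchanging twice gives back `A`. As `Re (x ū) = Re (u x̄)`, the exchange
preserves `Re (Aξ · ξ̄)`, while `|(u, y)|² ≤ |Aξ|² + |ξ|²` is controlled by the bound on `A`; hence
`Â` is strictly accretive. The block `A⊥⊥` inherits the accretivity of `A`, which bounds the entries
of `A⊥⊥⁻¹` by `κ⁻¹`, and with them those of `Â`. -/

namespace Matrix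

variable {m n α : Type*} [Fintype m] [DecidableEq m]

def pivotTransform [CommRing α] (A : Matrix (m ⊕ n) (m ⊕ n) α) : Matrix (m ⊕ n) (m ⊕ n) α :=
  fromBlocks (A.toBlocks₁₁)⁻¹ (-(A.toBlocks₁₁)⁻¹ * A.toBlocks₁₂)
    (A.toBlocks₂₁ * (A.toBlocks₁₁)⁻¹)
    (A.toBlocks₂₂ - A.toBlocks₂₁ * (A.toBlocks₁₁)⁻¹ * A.toBlocks₁₂)

theorem pivotTransform_pivotTransform [CommRing α] {A : Matrix (m ⊕ n) (m ⊕ n) α}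
    (hA : IsUnit A.toBlocks₁₁.det) : A.pivotTransform.pivotTransform = A := by
  conv_rhs => rw [← fromBlocks_toBlocks A]
  simp only [pivotTransform, toBlocks_fromBlocks₁₁, toBlocks_fromBlocks₁₂, toBlocks_fromBlocks₂₁,
    toBlocks_fromBlocks₂₂, nonsing_inv_nonsing_inv _ hA]
  congr 1
  · rw [Matrix.neg_mul, Matrix.neg_mul, Matrix.mul_neg, neg_neg, ← Matrix.mul_assoc,
      mul_nonsing_inv _ hA, Matrix.one_mul]
  · rw [Matrix.mul_assoc, nonsing_inv_mul _ hA, Matrix.mul_one]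
  · rw [Matrix.mul_assoc _ _ A.toBlocks₁₁, nonsing_inv_mul _ hA, Matrix.mul_one, Matrix.neg_mul,
      Matrix.mul_neg, Matrix.mul_assoc, sub_neg_eq_add, sub_add_cancel]

variable [Fintype n]

omit [DecidableEq m] in
theorem mulVec_sum_elim [CommRing α] (A : Matrix (m ⊕ n) (m ⊕ n) α) (x : m → α) (y : n → α) :
    A *ᵥ Sum.elim x y = Sum.elim (A.toBlocks₁₁ *ᵥ x + A.toBlocks₁₂ *ᵥ y)
      (A.toBlocks₂₁ *ᵥ x + A.toBlocks₂₂ *ᵥ y) := by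
  conv_lhs => rw [← fromBlocks_toBlocks A]
  rw [fromBlocks_mulVec, Sum.elim_comp_inl, Sum.elim_comp_inr]

theorem pivotTransform_mulVec [CommRing α] {A : Matrix (m ⊕ n) (m ⊕ n) α}
    (hA : IsUnit A.toBlocks₁₁.det) (x : m → α) (y : n → α) :
    A.pivotTransform *ᵥ Sum.elim (A.toBlocks₁₁ *ᵥ x + A.toBlocks₁₂ *ᵥ y) y =
      Sum.elim x (A.toBlocks₂₁ *ᵥ x + A.toBlocks₂₂ *ᵥ y) := by
  rw [pivotTransform, fromBlocks_mulVec, Sum.elim_comp_inl, Sum.elim_comp_inr]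
  congr 1
  · rw [mulVec_add, mulVec_mulVec, nonsing_inv_mul _ hA, one_mulVec, mulVec_mulVec, Matrix.neg_mul,
      neg_mulVec, add_neg_cancel_right]
  · rw [mulVec_add, mulVec_mulVec, Matrix.mul_assoc, nonsing_inv_mul _ hA, Matrix.mul_one,
      sub_mulVec, mulVec_mulVec]
    abel

omit [DecidableEq m] in
theorem re_sum_elim_dotProduct_star_swap (x u : m → ℂ) (y v : n → ℂ) :
    (Sum.elim x v ⬝ᵥ star (Sum.elim u y)).re = (Sum.elim u v ⬝ᵥ star (Sum.elim x y)).re := by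
  have hswap : (x ⬝ᵥ star u).re = (u ⬝ᵥ star x).re := by
    rw [dotProduct_star, ← Complex.conj_re]; rfl
  simp only [dotProduct, Fintype.sum_sum_type, Pi.star_apply, Sum.elim_inl, Sum.elim_inr,
    Complex.add_re]
  simp only [dotProduct, Pi.star_apply] at hswap
  rw [hswap]

section Accretive

variable {ι ι' : Type*} [Fintype ι]

theorem norm_mul_apply_le {l : Type*} [SeminormedRing α] {M : Matrix ι' ι α} {N : Matrix ι l α}
    {a b : ℝ} (hM : ∀ i k, ‖M i k‖ ≤ a) (hN : ∀ k j, ‖N k j‖ ≤ b) (i : ι') (j : l) :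
    ‖(M * N) i j‖ ≤ Fintype.card ι * (a * b) := by
  rw [mul_apply]
  calc ‖∑ k, M i k * N k j‖ ≤ ∑ k, ‖M i k‖ * ‖N k j‖ := norm_sum_le_of_le _ fun k _ => norm_mul_le _ _
    _ ≤ ∑ _k : ι, a * b := Finset.sum_le_sum fun k _ =>
        mul_le_mul (hM i k) (hN k j) (norm_nonneg _) ((norm_nonneg _).trans (hM i k))
    _ = Fintype.card ι * (a * b) := by rw [Finset.sum_const, Finset.card_univ, nsmul_eq_mul]

theorem sum_norm_sq_mulVec_le [Fintype ι'] {M : Matrix ι' ι ℂ} {C : ℝ} (hM : ∀ i j, ‖M i j‖ ≤ C)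
    (x : ι → ℂ) :
    ∑ i, ‖(M *ᵥ x) i‖ ^ 2 ≤ Fintype.card ι' * (Fintype.card ι * C ^ 2 * ∑ j, ‖x j‖ ^ 2) := by
  have hrow : ∀ i, ‖(M *ᵥ x) i‖ ≤ C * ∑ j, ‖x j‖ := fun i => by
    rw [Finset.mul_sum]
    exact norm_sum_le_of_le _ fun j _ => (norm_mul_le _ _).trans
      (mul_le_mul_of_nonneg_right (hM i j) (norm_nonneg _))
  have hcs : (∑ j, ‖x j‖) ^ 2 ≤ Fintype.card ι * ∑ j, ‖x j‖ ^ 2 := by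
    simpa using sq_sum_le_card_mul_sum_sq (s := Finset.univ) (f := fun j => ‖x j‖)
  calc ∑ i, ‖(M *ᵥ x) i‖ ^ 2 ≤ ∑ _i : ι', Fintype.card ι * C ^ 2 * ∑ j, ‖x j‖ ^ 2 :=
        Finset.sum_le_sum fun i _ => calc
          ‖(M *ᵥ x) i‖ ^ 2 ≤ (C * ∑ j, ‖x j‖) ^ 2 := pow_le_pow_left₀ (norm_nonneg _) (hrow i) 2
          _ = C ^ 2 * (∑ j, ‖x j‖) ^ 2 := mul_pow _ _ _
          _ ≤ C ^ 2 * (Fintype.card ι * ∑ j, ‖x j‖ ^ 2) := by gcongr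
          _ = Fintype.card ι * C ^ 2 * ∑ j, ‖x j‖ ^ 2 := by ring
    _ = _ := by rw [Finset.sum_const, Finset.card_univ, nsmul_eq_mul]

def IsStrictlyAccretive (κ : ℝ) (M : Matrix ι ι ℂ) : Prop :=
  ∀ x : ι → ℂ, κ * ∑ i, ‖x i‖ ^ 2 ≤ (M *ᵥ x ⬝ᵥ star x).re

theorem IsStrictlyAccretive.isUnit_det [DecidableEq ι] {κ : ℝ} {M : Matrix ι ι ℂ} (hκ : 0 < κ)
    (hM : IsStrictlyAccretive κ M) : IsUnit M.det := by
  rw [isUnit_iff_ne_zero, Ne, ← exists_mulVec_eq_zero_iff]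
  rintro ⟨x, hx, hMx⟩
  have hle := hM x
  rw [hMx, zero_dotProduct, Complex.zero_re] at hle
  have hsum : ∑ i, ‖x i‖ ^ 2 = 0 :=
    le_antisymm (nonpos_of_mul_nonpos_right hle hκ) (by positivity)
  rw [Finset.sum_eq_zero_iff_of_nonneg fun i _ => by positivity] at hsum
  exact hx (funext fun i => by simpa using hsum i (Finset.mem_univ i))

theorem IsStrictlyAccretive.toBlocks₁₁ [Fintype ι'] {κ : ℝ} {A : Matrix (ι ⊕ ι') (ι ⊕ ι') ℂ}
    (hA : IsStrictlyAccretive κ A) : IsStrictlyAccretive κ A.toBlocks₁₁ := by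
  intro x
  simpa [mulVec_sum_elim, dotProduct, Fintype.sum_sum_type] using hA (Sum.elim x 0)

theorem IsStrictlyAccretive.norm_inv_apply_le [DecidableEq ι] {κ : ℝ} {M : Matrix ι ι ℂ}
    (hκ : 0 < κ) (hM : IsStrictlyAccretive κ M) (i j : ι) : ‖M⁻¹ i j‖ ≤ κ⁻¹ := by
  -- test accretivity on the `j`-th column `x` of `M⁻¹`: `κ |x|² ≤ Re (conj x_j) ≤ |x_j| ≤ |x|`
  set x := M⁻¹ *ᵥ Pi.single j 1
  set s := ∑ l, ‖x l‖ ^ 2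
  have hMx : M *ᵥ x = Pi.single j 1 := by
    rw [mulVec_mulVec, mul_nonsing_inv _ (hM.isUnit_det hκ), one_mulVec]
  have hcol : ∀ k, ‖x k‖ ^ 2 ≤ s := fun k =>
    Finset.single_le_sum (f := fun l => ‖x l‖ ^ 2) (fun l _ => by positivity) (Finset.mem_univ k)
  have hform : κ * s ≤ ‖x j‖ := by
    refine (hM x).trans ?_
    rw [hMx, single_one_dotProduct, Pi.star_apply, Complex.star_def, Complex.conj_re]
    exact Complex.re_le_norm _
  have hs0 : 0 ≤ s := Finset.sum_nonneg fun l _ => sq_nonneg _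
  have hs : κ ^ 2 * s ≤ 1 := by
    have hsq : (κ * s) ^ 2 ≤ s := (pow_le_pow_left₀ (mul_nonneg hκ.le hs0) hform 2).trans (hcol j)
    rcases hs0.eq_or_lt with hs0 | hs0
    · simp [← hs0]
    · exact le_of_mul_le_mul_right (by linarith) hs0
  have hxi : (κ * ‖x i‖) ^ 2 ≤ 1 := by
    rw [mul_pow]
    exact (mul_le_mul_of_nonneg_left (hcol i) (by positivity)).trans hs
  rw [inv_eq_one_div κ, le_div_iff₀ hκ, mul_comm]
  simpa [x, mulVec_single_one] using (pow_le_one_iff_of_nonneg (by positivity) two_ne_zero).mp hxi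

theorem IsStrictlyAccretive.pivotTransform {κ C : ℝ} {A : Matrix (m ⊕ n) (m ⊕ n) ℂ} (hκ : 0 < κ)
    (hA : IsStrictlyAccretive κ A) (hC : ∀ i j, ‖A i j‖ ≤ C) :
    IsStrictlyAccretive (κ / (1 + Fintype.card (m ⊕ n) * (Fintype.card (m ⊕ n) * C ^ 2)))
      A.pivotTransform := by
  set D : ℝ := 1 + Fintype.card (m ⊕ n) * (Fintype.card (m ⊕ n) * C ^ 2)
  have hD : 0 < D := by positivity
  intro ζ
  have hP := hA.toBlocks₁₁.isUnit_det hκ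
  set y := ζ ∘ Sum.inr
  set x := (A.toBlocks₁₁)⁻¹ *ᵥ (ζ ∘ Sum.inl - A.toBlocks₁₂ *ᵥ y)
  set ξ := Sum.elim x y
  have hζ : ζ = Sum.elim (A.toBlocks₁₁ *ᵥ x + A.toBlocks₁₂ *ᵥ y) y := by
    rw [mulVec_mulVec, mul_nonsing_inv _ hP, one_mulVec, sub_add_cancel, Sum.elim_comp_inl_inr]
  have hform : (A.pivotTransform *ᵥ ζ ⬝ᵥ star ζ).re = (A *ᵥ ξ ⬝ᵥ star ξ).re := by
    rw [hζ, pivotTransform_mulVec hP, mulVec_sum_elim, re_sum_elim_dotProduct_star_swap]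
  have hnorm : ∑ i, ‖ζ i‖ ^ 2 ≤ ∑ i, ‖(A *ᵥ ξ) i‖ ^ 2 + ∑ i, ‖ξ i‖ ^ 2 := by
    rw [hζ, mulVec_sum_elim]
    simp only [ξ, Fintype.sum_sum_type, Sum.elim_inl, Sum.elim_inr]
    have : 0 ≤ ∑ i, ‖(A.toBlocks₂₁ *ᵥ x + A.toBlocks₂₂ *ᵥ y) i‖ ^ 2 := by positivity
    have : 0 ≤ ∑ i, ‖x i‖ ^ 2 := by positivity
    linarith
  have hAξ := sum_norm_sq_mulVec_le hC ξ
  calc _ ≤ κ / D * (D * ∑ i, ‖ξ i‖ ^ 2) := by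
        gcongr
        linarith
    _ = κ * ∑ i, ‖ξ i‖ ^ 2 := by field_simp
    _ ≤ _ := hform ▸ hA ξ

theorem IsStrictlyAccretive.norm_pivotTransform_apply_le {κ C : ℝ}
    {A : Matrix (m ⊕ n) (m ⊕ n) ℂ} (hκ : 0 < κ) (hA : IsStrictlyAccretive κ A) (hC₀ : 0 ≤ C)
    (hC : ∀ i j, ‖A i j‖ ≤ C) (i j : m ⊕ n) :
    ‖A.pivotTransform i j‖ ≤ C + (1 + Fintype.card m * C) ^ 2 / κ := by
  set c : ℝ := (Fintype.card m : ℝ)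
  have hinv : ∀ i j, ‖(A.toBlocks₁₁)⁻¹ i j‖ ≤ κ⁻¹ := hA.toBlocks₁₁.norm_inv_apply_le hκ
  have hQ : ∀ i j, ‖A.toBlocks₁₂ i j‖ ≤ C := fun i j => hC _ _
  have hR : ∀ i j, ‖A.toBlocks₂₁ i j‖ ≤ C := fun i j => hC _ _
  have hS : ∀ i j, ‖A.toBlocks₂₂ i j‖ ≤ C := fun i j => hC _ _
  have hRinv : ∀ i j, ‖(A.toBlocks₂₁ * (A.toBlocks₁₁)⁻¹) i j‖ ≤ c * (C * κ⁻¹) :=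
    norm_mul_apply_le hR hinv
  have hexpand : (1 + c * C) ^ 2 / κ = κ⁻¹ + 2 * (c * (C * κ⁻¹)) + c * (c * (C * κ⁻¹) * C) := by
    field_simp
    ring
  have : 0 ≤ κ⁻¹ := by positivity
  have : 0 ≤ c * (C * κ⁻¹) := by positivity
  have : 0 ≤ c * (c * (C * κ⁻¹) * C) := by positivity
  rcases i with i | i <;> rcases j with j | j
  · simp only [Matrix.pivotTransform, fromBlocks_apply₁₁]
    linarith [hinv i j]
  · simp only [Matrix.pivotTransform, fromBlocks_apply₁₂, Matrix.neg_mul, neg_apply, norm_neg]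
    have := norm_mul_apply_le hinv hQ i j
    linarith
  · simp only [Matrix.pivotTransform, fromBlocks_apply₂₁]
    linarith [hRinv i j]
  · simp only [Matrix.pivotTransform, fromBlocks_apply₂₂, sub_apply]
    have := norm_mul_apply_le hRinv hQ i j
    linarith [norm_sub_le (A.toBlocks₂₂ i j) ((A.toBlocks₂₁ * (A.toBlocks₁₁)⁻¹ * A.toBlocks₁₂) i j),
      hS i j]

end Accretive

end Matrix

theorem hatMatrix_eq_pivotTransform {n : ℕ} (A : Matrix (Unit ⊕ Fin n) (Unit ⊕ Fin n) ℂ) :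
    hatMatrix A = A.pivotTransform :=
  rfl

/-- The transformation `A ↦ Â` is a self-inverse bijection of the set of bounded strictly
accretive matrices onto itself, with accretivity and boundedness constants controlled by
`κ` and the bound on `A`. -/
theorem stmt16 (n : ℕ) (κ C : ℝ) (hκ : 0 < κ) (hC : 0 < C) :
    ∃ κ' C' : ℝ, 0 < κ' ∧ 0 < C' ∧
      ∀ A : Matrix (Unit ⊕ Fin n) (Unit ⊕ Fin n) ℂ,
        StrictlyAccretive n κ A → (∀ i j, ‖A i j‖ ≤ C) →
          StrictlyAccretive n κ' (hatMatrix A) ∧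
          (∀ i j, ‖hatMatrix A i j‖ ≤ C') ∧
          hatMatrix (hatMatrix A) = A := by
  refine ⟨κ / (1 + Fintype.card (Unit ⊕ Fin n) * (Fintype.card (Unit ⊕ Fin n) * C ^ 2)),
    C + (1 + Fintype.card Unit * C) ^ 2 / κ, by positivity, by positivity, fun A hA hAC => ?_⟩
  have hA' : A.IsStrictlyAccretive κ := hA
  simp only [hatMatrix_eq_pivotTransform]
  exact ⟨hA'.pivotTransform hκ hAC, hA'.norm_pivotTransform_apply_le hκ hC.le hAC,
    pivotTransform_pivotTransform (hA'.toBlocks₁₁.isUnit_det hκ)⟩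
end
end
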